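/- Sign-change theorem (Kan–Moshchevitin): if α, β are irrational with α ± β ∉ ℤ, then the difference ψ_α(t) − ψ_β(t) changes sign infinitely often as t → ∞. -/

import Mathlib

/-- Distance from a real number to the nearest integer. -/
noncomputable def dni (x : ℝ) : ℝ := |x - round x|

/-- The irrationality measure function ψ_ξ(t) = min_{1 ≤ q ≤ t, q ∈ ℤ} ‖qξ‖. -/
noncomputable def psi (ξ t : ℝ) : ℝ :=
  sInf {v : ℝ | ∃ q : ℤ, 1 ≤ q ∧ (q : ℝ) ≤ t ∧ v = dni ((q : ℝ) * ξ)}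

/-!
For irrational `ξ` let `q₀ = 1 < q₁ < ⋯` be its best approximation denominators (`qₙ₊₁` is the
first `q > qₙ` with `‖qξ‖ < ‖qₙξ‖`), `pₙ` the integer nearest to `qₙξ` and `ξₙ = |qₙξ - pₙ|`.
Then `ψ_ξ = ξₙ` on `[qₙ, qₙ₊₁)`, the signs of `qₙξ - pₙ` alternate, `qₙ + qₙ₊₁ ≤ qₙ₊₂`, and
`qₙ₊₁ξₙ + qₙξₙ₊₁ = |qₙpₙ₊₁ - qₙ₊₁pₙ| = 1`.

Suppose `ψ_β ≤ ψ_α` on `[T, ∞)`, write primes for the data of `β`, and let `f n` be the first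
index with `ξ'_{f n} ≤ ξₙ`. Comparing `ψ` at `qₙ` gives `q'_{f n} ≤ qₙ`. A jump
`f (n+1) = k + 2 ≥ f n + 2` would give `1 = q'_{k+1}ξ'_k + q'_kξ'_{k+1} ≤ q'_{k+2}ξₙ ≤ qₙ₊₁ξₙ < 1`,
so, as `f → ∞`, somewhere `f (n+1) = f n + 1`. There the identity for `β` is termwise at most
the one for `α`, so the denominators and errors coincide. By alternation the remainders then
agree up to one common sign, hence `qₙ(α ∓ β)` and `qₙ₊₁(α ∓ β)` are integers, and so is
`α ∓ β` since `qₙ` and `qₙ₊₁` are coprime.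
-/

open Filter Topology

lemma dni_le_abs_sub_intCast (x : ℝ) (z : ℤ) : dni x ≤ |x - z| := round_le x z

lemma Irrational.dni_pos {x : ℝ} (hx : Irrational x) : 0 < dni x :=
  abs_pos.2 (sub_ne_zero.2 (hx.ne_int _))

lemma exists_pos_dni_natCast_mul_lt (ξ : ℝ) {δ : ℝ} (hδ : 0 < δ) :
    ∃ k : ℕ, 0 < k ∧ dni (k * ξ) < δ := by
  obtain ⟨N, hN⟩ := exists_nat_one_div_lt hδ
  obtain ⟨k, hk, -, hkN⟩ := Real.exists_nat_abs_mul_sub_round_le ξ N.succ_pos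
  refine ⟨k, hk, hkN.trans_lt (lt_of_le_of_lt ?_ hN)⟩
  gcongr
  linarith

lemma abs_sub_lt_abs_of_mul_pos {K : Type*} [CommRing K] [LinearOrder K] [IsStrictOrderedRing K]
    {a b : K} (hab : 0 < a * b) (h : |b| < |a|) : |b - a| < |a| := by
  rcases pos_and_pos_or_neg_and_neg_of_mul_pos hab with ⟨ha, hb⟩ | ⟨ha, hb⟩
  · rw [abs_of_pos ha, abs_of_pos hb] at h
    rw [abs_of_pos ha, abs_sub_lt_iff]
    constructor <;> linarith
  · rw [abs_of_neg ha, abs_of_neg hb] at h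
    rw [abs_of_neg ha, abs_sub_lt_iff]
    constructor <;> linarith

lemma abs_mul_sub_mul_of_mul_neg {K : Type*} [CommRing K] [LinearOrder K] [IsStrictOrderedRing K]
    {a b x y : K} (hab : a * b < 0) (hx : 0 ≤ x) (hy : 0 ≤ y) :
    |x * a - y * b| = x * |a| + y * |b| := by
  rcases mul_neg_iff.1 hab with ⟨ha, hb⟩ | ⟨ha, hb⟩
  · rw [abs_of_nonneg (by nlinarith), abs_of_pos ha, abs_of_neg hb]
    ring
  · rw [abs_of_nonpos (by nlinarith), abs_of_neg ha, abs_of_pos hb]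
    ring

lemma exists_intCast_eq_of_isCoprime {a b : ℤ} (hab : IsCoprime a b) {γ : ℝ}
    (ha : ∃ z : ℤ, a * γ = z) (hb : ∃ z : ℤ, b * γ = z) : ∃ z : ℤ, γ = z := by
  obtain ⟨u, v, huv⟩ := hab
  obtain ⟨za, hza⟩ := ha
  obtain ⟨zb, hzb⟩ := hb
  have huv' : (u * a + v * b : ℝ) = 1 := by exact_mod_cast huv
  exact ⟨u * za + v * zb, by push_cast; linear_combination (-γ) * huv' + u * hza + v * hzb⟩

lemma exists_lt_succ_of_tendsto_atTop {α : Type*} [LinearOrder α] [NoMaxOrder α] {f : ℕ → α}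
    (hf : Tendsto f atTop atTop) (N : ℕ) : ∃ n ≥ N, f n < f (n + 1) := by
  by_contra! h
  have hle : ∀ n ≥ N, f n ≤ f N := fun n hn => by
    induction n, hn using Nat.le_induction with
    | base => rfl
    | succ n hn ih => exact (h n hn).trans ih
  obtain ⟨n, hn, hNn⟩ := ((hf.eventually_gt_atTop (f N)).and (eventually_ge_atTop N)).exists
  exact (hle n hNn).not_gt hn

section BestApproximation

variable {ξ : ℝ}

lemma Irrational.exists_lt_dni_lt (hξ : Irrational ξ) {q : ℕ} (hq : 0 < q) :
    ∃ q' : ℕ, q < q' ∧ dni (q' * ξ) < dni (q * ξ) := by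
  obtain ⟨j, hj, hjmin⟩ := (Finset.Icc 1 q).exists_min_image (fun j : ℕ => dni (j * ξ))
    ⟨q, Finset.mem_Icc.2 ⟨hq, le_rfl⟩⟩
  rw [Finset.mem_Icc] at hj
  obtain ⟨k, hk, hkj⟩ :=
    exists_pos_dni_natCast_mul_lt ξ (hξ.natCast_mul (by omega : j ≠ 0)).dni_pos
  have hqk : q < k := by
    by_contra! hkq
    exact (hjmin k (Finset.mem_Icc.2 ⟨hk, hkq⟩)).not_gt hkj
  exact ⟨k, hqk, hkj.trans_le (hjmin q (Finset.mem_Icc.2 ⟨hq, le_rfl⟩))⟩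

open Classical in
/-- The fallback `q + 1` is only taken for rational `ξ` or `q = 0`. -/
noncomputable def nextBestDen (ξ : ℝ) (q : ℕ) : ℕ :=
  if h : ∃ q' : ℕ, q < q' ∧ dni (q' * ξ) < dni (q * ξ) then Nat.find h else q + 1

lemma lt_nextBestDen (ξ : ℝ) (q : ℕ) : q < nextBestDen ξ q := by
  unfold nextBestDen
  split_ifs with h
  · exact (Nat.find_spec h).1
  · exact q.lt_succ_self

lemma dni_nextBestDen_lt (hξ : Irrational ξ) {q : ℕ} (hq : 0 < q) :
    dni (nextBestDen ξ q * ξ) < dni (q * ξ) := by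
  rw [nextBestDen, dif_pos (hξ.exists_lt_dni_lt hq)]
  exact (Nat.find_spec (hξ.exists_lt_dni_lt hq)).2

lemma dni_le_of_lt_nextBestDen (hξ : Irrational ξ) {q j : ℕ} (hq : 0 < q) (hqj : q < j)
    (hj : j < nextBestDen ξ q) : dni (q * ξ) ≤ dni (j * ξ) := by
  rw [nextBestDen, dif_pos (hξ.exists_lt_dni_lt hq)] at hj
  exact not_lt.1 fun h => Nat.find_min _ hj ⟨hqj, h⟩

noncomputable def bestDen (ξ : ℝ) : ℕ → ℕ
  | 0 => 1
  | n + 1 => nextBestDen ξ (bestDen ξ n)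

noncomputable def bestNum (ξ : ℝ) (n : ℕ) : ℤ := round ((bestDen ξ n : ℝ) * ξ)

noncomputable def bestRem (ξ : ℝ) (n : ℕ) : ℝ := bestDen ξ n * ξ - bestNum ξ n

noncomputable def bestErr (ξ : ℝ) (n : ℕ) : ℝ := dni (bestDen ξ n * ξ)

lemma bestDen_strictMono (ξ : ℝ) : StrictMono (bestDen ξ) :=
  strictMono_nat_of_lt_succ fun n => lt_nextBestDen ξ (bestDen ξ n)

lemma bestDen_pos (ξ : ℝ) (n : ℕ) : 0 < bestDen ξ n :=
  Nat.one_pos.trans_le ((bestDen_strictMono ξ).monotone n.zero_le)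

lemma abs_bestRem (ξ : ℝ) (n : ℕ) : |bestRem ξ n| = bestErr ξ n := rfl

lemma bestErr_pos (hξ : Irrational ξ) (n : ℕ) : 0 < bestErr ξ n :=
  (hξ.natCast_mul (bestDen_pos ξ n).ne').dni_pos

lemma bestRem_ne_zero (hξ : Irrational ξ) (n : ℕ) : bestRem ξ n ≠ 0 :=
  abs_pos.1 (bestErr_pos hξ n)

lemma bestErr_strictAnti (hξ : Irrational ξ) : StrictAnti (bestErr ξ) :=
  strictAnti_nat_of_succ_lt fun n => dni_nextBestDen_lt hξ (bestDen_pos ξ n)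

lemma bestErr_le_dni_of_bestDen_le (hξ : Irrational ξ) {n j : ℕ} (hnj : bestDen ξ n ≤ j)
    (hj : j < bestDen ξ (n + 1)) : bestErr ξ n ≤ dni (j * ξ) := by
  rcases hnj.eq_or_lt with rfl | hlt
  · exact le_rfl
  · exact dni_le_of_lt_nextBestDen hξ (bestDen_pos ξ n) hlt hj

lemma bestErr_le_dni (hξ : Irrational ξ) (n : ℕ) {j : ℕ} (hj₀ : 0 < j)
    (hj : j < bestDen ξ (n + 1)) : bestErr ξ n ≤ dni (j * ξ) := by
  induction n with
  | zero => exact bestErr_le_dni_of_bestDen_le hξ hj₀ hj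
  | succ n ih =>
    rcases le_or_gt (bestDen ξ (n + 1)) j with hnj | hjn
    · exact bestErr_le_dni_of_bestDen_le hξ hnj hj
    · exact (bestErr_strictAnti hξ (Nat.lt_add_one n)).le.trans (ih hjn)

lemma psi_le_dni {t : ℝ} {q : ℕ} (hq : 0 < q) (hqt : (q : ℝ) ≤ t) :
    psi ξ t ≤ dni (q * ξ) :=
  csInf_le ⟨0, fun _ ⟨_, _, _, hv⟩ => hv ▸ abs_nonneg _⟩
    ⟨q, by exact_mod_cast hq, by exact_mod_cast hqt, by simp⟩

lemma le_psi {t c : ℝ} (ht : 1 ≤ t) (h : ∀ q : ℕ, 0 < q → (q : ℝ) ≤ t → c ≤ dni (q * ξ)) :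
    c ≤ psi ξ t := by
  refine le_csInf ⟨_, 1, le_rfl, by exact_mod_cast ht, rfl⟩ ?_
  rintro _ ⟨q, hq, hqt, rfl⟩
  lift q to ℕ using by omega
  exact_mod_cast h q (by exact_mod_cast hq) (by exact_mod_cast hqt)

lemma psi_bestDen_le (ξ : ℝ) (n : ℕ) : psi ξ (bestDen ξ n) ≤ bestErr ξ n :=
  psi_le_dni (bestDen_pos ξ n) le_rfl

lemma bestErr_le_psi (hξ : Irrational ξ) {n : ℕ} {t : ℝ} (ht : 1 ≤ t)
    (htn : t < bestDen ξ (n + 1)) : bestErr ξ n ≤ psi ξ t :=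
  le_psi ht fun _ hq hqt => bestErr_le_dni hξ n hq (by exact_mod_cast hqt.trans_lt htn)

/-- Otherwise `d = qₖ - qₙ < qₙ₊₁` would approximate `ξ` better than `qₙ`: for remainders of the
same sign, `‖dξ‖ ≤ |(qₖξ - pₖ) - (qₙξ - pₙ)| < ξₙ`. -/
lemma add_le_bestDen_of_mul_pos (hξ : Irrational ξ) {n k : ℕ} (hnk : n < k)
    (h : 0 < bestRem ξ n * bestRem ξ k) : bestDen ξ n + bestDen ξ (n + 1) ≤ bestDen ξ k := by
  by_contra! hlt
  have hden : bestDen ξ n < bestDen ξ k := bestDen_strictMono ξ hnk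
  set d := bestDen ξ k - bestDen ξ n
  have hd :
      (d : ℝ) * ξ - ((bestNum ξ k - bestNum ξ n : ℤ) : ℝ) = bestRem ξ k - bestRem ξ n := by
    simp only [d, bestRem, Nat.cast_sub hden.le]
    push_cast
    ring
  have hmin : bestErr ξ n ≤ dni (d * ξ) := bestErr_le_dni hξ n (by omega) (by omega)
  have hd_le : dni (d * ξ) ≤ |bestRem ξ k - bestRem ξ n| := hd ▸ dni_le_abs_sub_intCast _ _
  have hsmall : |bestRem ξ k - bestRem ξ n| < bestErr ξ n :=
    abs_sub_lt_abs_of_mul_pos h (bestErr_strictAnti hξ hnk)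
  linarith

lemma bestRem_mul_bestRem_succ_neg (hξ : Irrational ξ) (n : ℕ) :
    bestRem ξ n * bestRem ξ (n + 1) < 0 := by
  refine lt_of_le_of_ne (not_lt.1 fun h => ?_)
    (mul_ne_zero (bestRem_ne_zero hξ n) (bestRem_ne_zero hξ (n + 1)))
  have := add_le_bestDen_of_mul_pos hξ (Nat.lt_add_one n) h
  have := bestDen_pos ξ n
  omega

lemma bestDen_add_bestDen_succ_le (hξ : Irrational ξ) (n : ℕ) :
    bestDen ξ n + bestDen ξ (n + 1) ≤ bestDen ξ (n + 2) := by
  refine add_le_bestDen_of_mul_pos hξ (by omega) ?_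
  have h₀ := bestRem_mul_bestRem_succ_neg hξ n
  have h₁ := bestRem_mul_bestRem_succ_neg hξ (n + 1)
  have := mul_self_pos.2 (bestRem_ne_zero hξ (n + 1))
  nlinarith [mul_pos_of_neg_of_neg h₀ h₁]

lemma bestDen_succ_mul_bestErr_le_one (hξ : Irrational ξ) (n : ℕ) :
    (bestDen ξ (n + 1) : ℝ) * bestErr ξ n ≤ 1 := by
  have hq : 1 < bestDen ξ (n + 1) :=
    (Nat.succ_le_of_lt (bestDen_pos ξ n)).trans_lt (bestDen_strictMono ξ (Nat.lt_add_one n))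
  obtain ⟨k, hk, hkN, hkerr⟩ :=
    Real.exists_nat_abs_mul_sub_round_le ξ (by omega : 0 < bestDen ξ (n + 1) - 1)
  have hcast : ((bestDen ξ (n + 1) - 1 : ℕ) : ℝ) + 1 = bestDen ξ (n + 1) := by
    rw [Nat.cast_sub hq.le]
    ring
  rw [hcast] at hkerr
  have hmin : bestErr ξ n ≤ dni (k * ξ) := bestErr_le_dni hξ n hk (by omega)
  rw [← le_div_iff₀' (by positivity)]
  exact hmin.trans hkerr

lemma abs_cast_bestDen_mul_bestNum_sub (hξ : Irrational ξ) (n : ℕ) :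
    |(((bestDen ξ n : ℤ) * bestNum ξ (n + 1) - bestDen ξ (n + 1) * bestNum ξ n : ℤ) : ℝ)| =
      bestDen ξ (n + 1) * bestErr ξ n + bestDen ξ n * bestErr ξ (n + 1) := by
  have hdet :
      (((bestDen ξ n : ℤ) * bestNum ξ (n + 1) - bestDen ξ (n + 1) * bestNum ξ n : ℤ) : ℝ) =
        bestDen ξ (n + 1) * bestRem ξ n - bestDen ξ n * bestRem ξ (n + 1) := by
    simp only [bestRem]
    push_cast
    ring
  rw [hdet, abs_mul_sub_mul_of_mul_neg (bestRem_mul_bestRem_succ_neg hξ n) (by positivity)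
    (by positivity), abs_bestRem, abs_bestRem]

lemma abs_bestDen_mul_bestNum_sub (hξ : Irrational ξ) (n : ℕ) :
    |(bestDen ξ n : ℤ) * bestNum ξ (n + 1) - bestDen ξ (n + 1) * bestNum ξ n| = 1 := by
  set D := (bestDen ξ n : ℤ) * bestNum ξ (n + 1) - bestDen ξ (n + 1) * bestNum ξ n
  have hD : |(D : ℝ)| = _ := abs_cast_bestDen_mul_bestNum_sub hξ n
  have hq : (bestDen ξ n : ℝ) < bestDen ξ (n + 1) := by
    exact_mod_cast bestDen_strictMono ξ (Nat.lt_add_one n)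
  have hq₀ : (0 : ℝ) < bestDen ξ n := by exact_mod_cast bestDen_pos ξ n
  have he₀ := bestErr_pos hξ n
  have he₁ := bestErr_pos hξ (n + 1)
  have he := bestErr_strictAnti hξ (Nat.lt_add_one n)
  have hle := bestDen_succ_mul_bestErr_le_one hξ n
  have hpos : (0 : ℝ) < |(D : ℝ)| := by rw [hD]; positivity
  have hlt : |(D : ℝ)| < 2 := by
    rw [hD]
    nlinarith [mul_lt_mul hq he.le he₁ (by positivity)]
  have hpos' : 0 < |D| := by exact_mod_cast hpos
  have hlt' : |D| < 2 := by exact_mod_cast hlt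
  omega

lemma bestDen_succ_mul_bestErr_add_eq_one (hξ : Irrational ξ) (n : ℕ) :
    (bestDen ξ (n + 1) : ℝ) * bestErr ξ n + bestDen ξ n * bestErr ξ (n + 1) = 1 := by
  rw [← abs_cast_bestDen_mul_bestNum_sub hξ n, ← Int.cast_abs,
    abs_bestDen_mul_bestNum_sub hξ n, Int.cast_one]

lemma bestDen_succ_mul_bestErr_lt_one (hξ : Irrational ξ) (n : ℕ) :
    (bestDen ξ (n + 1) : ℝ) * bestErr ξ n < 1 := by
  have : (0 : ℝ) < bestDen ξ n * bestErr ξ (n + 1) :=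
    mul_pos (by exact_mod_cast bestDen_pos ξ n) (bestErr_pos hξ (n + 1))
  linarith [bestDen_succ_mul_bestErr_add_eq_one hξ n]

lemma isCoprime_bestDen (hξ : Irrational ξ) (n : ℕ) :
    IsCoprime (bestDen ξ n : ℤ) (bestDen ξ (n + 1)) := by
  set D := (bestDen ξ n : ℤ) * bestNum ξ (n + 1) - bestDen ξ (n + 1) * bestNum ξ n
  have hDD : D * D = 1 := by
    rw [← abs_mul_abs_self, abs_bestDen_mul_bestNum_sub hξ n, one_mul]
  exact ⟨D * bestNum ξ (n + 1), -(D * bestNum ξ n), by linear_combination hDD⟩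

lemma tendsto_bestErr (hξ : Irrational ξ) : Tendsto (bestErr ξ) atTop (𝓝 0) := by
  refine tendsto_of_tendsto_of_tendsto_of_le_of_le tendsto_const_nhds
    tendsto_one_div_add_atTop_nhds_zero_nat (fun n => (bestErr_pos hξ n).le) fun n => ?_
  have hn : (n : ℝ) + 1 ≤ bestDen ξ (n + 1) := by
    exact_mod_cast (bestDen_strictMono ξ).id_le (n + 1)
  rw [le_div_iff₀' (by positivity)]
  nlinarith [bestDen_succ_mul_bestErr_le_one hξ n, bestErr_pos hξ n]

end BestApproximation

section Comparison

variable {α β : ℝ}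

lemma bestDen_le_of_psi_le (hβ : Irrational β) {m : ℕ} {t x : ℝ} (ht : 1 ≤ t)
    (hψ : psi β t ≤ x) (hm : ∀ k < m, x < bestErr β k) : (bestDen β m : ℝ) ≤ t := by
  cases m with
  | zero => simpa [bestDen] using ht
  | succ k =>
    exact not_lt.1 fun h => (hm k (Nat.lt_add_one k)).not_ge ((bestErr_le_psi hβ ht h).trans hψ)

lemma bestDen_succ_lt_bestDen_add_two (hα : Irrational α) (hβ : Irrational β) {n k : ℕ}
    (h : bestErr β k ≤ bestErr α n) : bestDen α (n + 1) < bestDen β (k + 2) := by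
  have hk₁ : bestErr β (k + 1) ≤ bestErr α n :=
    (bestErr_strictAnti hβ (Nat.lt_add_one k)).le.trans h
  have hfib : ((bestDen β k + bestDen β (k + 1) : ℕ) : ℝ) ≤ bestDen β (k + 2) := by
    exact_mod_cast bestDen_add_bestDen_succ_le hβ k
  push_cast at hfib
  have hβ_id := bestDen_succ_mul_bestErr_add_eq_one hβ k
  have hα_lt := bestDen_succ_mul_bestErr_lt_one hα n
  have hq₀ : (0 : ℝ) ≤ bestDen β k := Nat.cast_nonneg _
  have hq₁ : (0 : ℝ) ≤ bestDen β (k + 1) := Nat.cast_nonneg _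
  have he := bestErr_pos hα n
  have : (bestDen α (n + 1) : ℝ) * bestErr α n < bestDen β (k + 2) * bestErr α n := by
    nlinarith [mul_le_mul_of_nonneg_left h hq₁, mul_le_mul_of_nonneg_left hk₁ hq₀]
  exact_mod_cast lt_of_mul_lt_mul_right this he.le

lemma bestDen_eq_and_bestErr_eq (hα : Irrational α) (hβ : Irrational β) {n m : ℕ}
    (hq₀ : bestDen β m ≤ bestDen α n) (hq₁ : bestDen β (m + 1) ≤ bestDen α (n + 1))
    (he₀ : bestErr β m ≤ bestErr α n) (he₁ : bestErr β (m + 1) ≤ bestErr α (n + 1)) :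
    bestDen β m = bestDen α n ∧ bestDen β (m + 1) = bestDen α (n + 1) ∧
      bestErr β m = bestErr α n ∧ bestErr β (m + 1) = bestErr α (n + 1) := by
  have hq₀' : (bestDen β m : ℝ) ≤ bestDen α n := by exact_mod_cast hq₀
  have hq₁' : (bestDen β (m + 1) : ℝ) ≤ bestDen α (n + 1) := by exact_mod_cast hq₁
  have hsum :=
    (bestDen_succ_mul_bestErr_add_eq_one hβ m).trans (bestDen_succ_mul_bestErr_add_eq_one hα n).symm
  obtain ⟨h₁, h₀⟩ := (add_eq_add_iff_eq_and_eq
    (mul_le_mul hq₁' he₀ (bestErr_pos hβ m).le (Nat.cast_nonneg _))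
    (mul_le_mul hq₀' he₁ (bestErr_pos hβ (m + 1)).le (Nat.cast_nonneg _))).1 hsum
  obtain ⟨hd₁, he₀'⟩ := (mul_eq_mul_iff_eq_and_eq_of_pos hq₁' he₀
    (by exact_mod_cast bestDen_pos β (m + 1)) (bestErr_pos hα n)).1 h₁
  obtain ⟨hd₀, he₁'⟩ := (mul_eq_mul_iff_eq_and_eq_of_pos hq₀' he₁
    (by exact_mod_cast bestDen_pos β m) (bestErr_pos hα (n + 1))).1 h₀
  exact ⟨by exact_mod_cast hd₀, by exact_mod_cast hd₁, he₀', he₁'⟩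

lemma exists_int_sub_or_add_of_bestDen_eq (hα : Irrational α) (hβ : Irrational β) {n m : ℕ}
    (hq₀ : bestDen β m = bestDen α n) (hq₁ : bestDen β (m + 1) = bestDen α (n + 1))
    (he₀ : bestErr β m = bestErr α n) (he₁ : bestErr β (m + 1) = bestErr α (n + 1)) :
    ∃ z : ℤ, α - β = z ∨ α + β = z := by
  have hsub : ∀ {i j : ℕ}, bestDen β j = bestDen α i → bestRem β j = bestRem α i →
      ∃ z : ℤ, ((bestDen α i : ℤ) : ℝ) * (α - β) = z := fun {i j} hq hθ =>
    ⟨bestNum α i - bestNum β j, by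
      simp only [bestRem, hq] at hθ; push_cast; linear_combination -hθ⟩
  have hadd : ∀ {i j : ℕ}, bestDen β j = bestDen α i → bestRem β j = -bestRem α i →
      ∃ z : ℤ, ((bestDen α i : ℤ) : ℝ) * (α + β) = z := fun {i j} hq hθ =>
    ⟨bestNum α i + bestNum β j, by
      simp only [bestRem, hq] at hθ; push_cast; linear_combination hθ⟩
  have halt := bestRem_mul_bestRem_succ_neg hα n
  have halt' := bestRem_mul_bestRem_succ_neg hβ m
  have hcop := isCoprime_bestDen hα n
  rw [← abs_bestRem, ← abs_bestRem] at he₀ he₁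
  rcases abs_eq_abs.1 he₀ with h₀ | h₀ <;> rcases abs_eq_abs.1 he₁ with h₁ | h₁
  · obtain ⟨z, hz⟩ := exists_intCast_eq_of_isCoprime hcop (hsub hq₀ h₀) (hsub hq₁ h₁)
    exact ⟨z, .inl hz⟩
  · rw [h₀, h₁] at halt'
    linarith
  · rw [h₀, h₁] at halt'
    linarith
  · obtain ⟨z, hz⟩ := exists_intCast_eq_of_isCoprime hcop (hadd hq₀ h₀) (hadd hq₁ h₁)
    exact ⟨z, .inr hz⟩

lemma exists_int_sub_or_add_of_psi_le (hα : Irrational α) (hβ : Irrational β) {T : ℝ}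
    (h : ∀ t, T ≤ t → psi β t ≤ psi α t) : ∃ z : ℤ, α - β = z ∨ α + β = z := by
  classical
  have hex : ∀ n, ∃ m, bestErr β m ≤ bestErr α n := fun n =>
    ((tendsto_order.1 (tendsto_bestErr hβ)).2 _ (bestErr_pos hα n)).exists.imp fun _ => le_of_lt
  let f n := Nat.find (hex n)
  have hf : ∀ n, bestErr β (f n) ≤ bestErr α n := fun n => Nat.find_spec (hex n)
  have hf_tendsto : Tendsto f atTop atTop := tendsto_atTop.2 fun c => by
    filter_upwards [(tendsto_order.1 (tendsto_bestErr hα)).2 _ (bestErr_pos hβ c)] with n hn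
    exact ((bestErr_strictAnti hβ).lt_iff_gt.1 ((hf n).trans_lt hn)).le
  obtain ⟨N, hN⟩ := exists_nat_ge T
  have hden : ∀ n ≥ N, bestDen β (f n) ≤ bestDen α n := fun n hn => by
    have hTn : T ≤ bestDen α n :=
      hN.trans (by exact_mod_cast hn.trans ((bestDen_strictMono α).id_le n))
    exact_mod_cast bestDen_le_of_psi_le hβ (by exact_mod_cast bestDen_pos α n)
      ((h _ hTn).trans (psi_bestDen_le α n)) fun k hk => not_le.1 (Nat.find_min (hex n) hk)
  obtain ⟨n, hn, hlt⟩ := exists_lt_succ_of_tendsto_atTop hf_tendsto N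
  have hstep : f (n + 1) = f n + 1 := by
    refine le_antisymm (not_lt.1 fun hjump => ?_) hlt
    have hk : bestErr β (f (n + 1) - 2) ≤ bestErr α n :=
      ((bestErr_strictAnti hβ).antitone (by omega)).trans (hf n)
    have hlt' := bestDen_succ_lt_bestDen_add_two hα hβ hk
    rw [show f (n + 1) - 2 + 2 = f (n + 1) by omega] at hlt'
    exact hlt'.not_ge (hden (n + 1) (by omega))
  have he₁ := hf (n + 1)
  have hq₁ := hden (n + 1) (by omega)
  rw [hstep] at he₁ hq₁
  obtain ⟨hq₀, hq₁, he₀, he₁⟩ := bestDen_eq_and_bestErr_eq hα hβ (hden n hn) hq₁ (hf n) he₁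
  exact exists_int_sub_or_add_of_bestDen_eq hα hβ hq₀ hq₁ he₀ he₁

lemma exists_psi_lt (hα : Irrational α) (hβ : Irrational β) (hsum : ∀ z : ℤ, α + β ≠ z)
    (hdiff : ∀ z : ℤ, α - β ≠ z) (T : ℝ) : ∃ t, T ≤ t ∧ psi β t < psi α t := by
  by_contra! h
  obtain ⟨z, hz | hz⟩ := exists_int_sub_or_add_of_psi_le hβ hα h
  · exact hdiff (-z) (by push_cast; linarith)
  · exact hsum z (by linarith)

end Comparison

/-- Satz A (Kan–Moshchevitin): ψ_α(t) − ψ_β(t) changes sign infinitely often. -/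
theorem satzA (α β : ℝ) (hα : Irrational α) (hβ : Irrational β)
    (hsum : ∀ z : ℤ, α + β ≠ (z : ℝ)) (hdiff : ∀ z : ℤ, α - β ≠ (z : ℝ)) :
    ∀ T : ℝ, ∃ t₁ t₂ : ℝ, T ≤ t₁ ∧ T ≤ t₂ ∧
      psi α t₁ - psi β t₁ > 0 ∧ psi α t₂ - psi β t₂ < 0 := by
  intro T
  obtain ⟨t₁, hT₁, h₁⟩ := exists_psi_lt hα hβ hsum hdiff T
  obtain ⟨t₂, hT₂, h₂⟩ := exists_psi_lt hβ hα (fun z => add_comm α β ▸ hsum z)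
    (fun z h => hdiff (-z) (by push_cast; linarith)) T
  exact ⟨t₁, t₂, hT₁, hT₂, by linarith, by linarith⟩
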